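/- arXiv:0802.1578 — 2 statements merged into one kernel-verified Lean document; each statement's English description precedes it below -/
import Mathlib

section
/- For every finite guarded recursive specification E over BTA in which no internal actions occur and every variable X of E, there exists a closed PGA term P (over the set of basic instructions taken to be the set of basic actions) such that the thread |P| extracted from P equals the X-component of the unique solution of E in the projective limit model. -/
/-!
A guarded specification `E` makes the terms into a coalgebra `SpecTerm.step E` (a variable
behaves as its right-hand side), whose unfolding at `E X` is `ρ X`; from `E X` only the
finitely many subterms of right-hand sides are reachable. A finite coalgebra with states
numbered `0, …, m - 1` is simulated by the repetition of a program of `3 * m` instructions in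
which each state owns a block `+a; #d₁; #d₂`: since the instruction sequence is periodic, a
forward jump reaches the block of any state. Bisimilar states have equal unfoldings, which
gives both the restriction to the reachable states and the correctness of the simulation.
-/

inductive FinThread (A : Type) : Type where
  | dead : FinThread A
  | term : FinThread A
  | pcc : FinThread A → A → FinThread A → FinThread A

namespace FinThread
def proj {A : Type} : ℕ → FinThread A → FinThread A
  | 0, _ => .dead
  | _ + 1, .dead => .dead
  | _ + 1, .term => .term
  | n + 1, .pcc x a y => .pcc (proj n x) a (proj n y)
end FinThread

structure Thread (A : Type) : Type where
  approx : ℕ → FinThread A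
  coh : ∀ n, FinThread.proj n (approx (n + 1)) = approx n

/-- One step of behaviour over a state space `S`: inaction, termination, or
performing an action `a` with a state for the positive and one for the
negative reply. -/
inductive Step (A S : Type) : Type where
  | dead : Step A S
  | term : Step A S
  | node : S → A → S → Step A S

def stepApply {A S : Type} (g : S → FinThread A) : Step A S → FinThread A
  | .dead => .dead
  | .term => .term
  | .node s1 a s2 => .pcc (g s1) a (g s2)

/-- Approximations up to a given depth of the behaviour of a coalgebra. -/
def unfoldAux {A S : Type} (f : S → Step A S) : ℕ → S → FinThread A
  | 0, _ => .dead
  | n + 1, s => stepApply (unfoldAux f n) (f s)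

theorem proj_unfoldAux {A S : Type} (f : S → Step A S) :
    ∀ (n : ℕ) (s : S), FinThread.proj n (unfoldAux f (n + 1) s) = unfoldAux f n s := by
  intro n
  induction n with
  | zero => intro s; rfl
  | succ n ih =>
    intro s
    show FinThread.proj (n + 1) (stepApply (unfoldAux f (n + 1)) (f s)) =
      stepApply (unfoldAux f n) (f s)
    cases h : f s <;> simp [stepApply, FinThread.proj, ih]

/-- The thread (element of the projective limit model) produced by a state of
a coalgebra. -/
def Thread.unfold {A S : Type} (f : S → Step A S) (s : S) : Thread A :=
  ⟨fun n => unfoldAux f n s, fun n => proj_unfoldAux f n s⟩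

namespace Thread

/-- Inaction D, lifted componentwise to the projective limit model. -/
def dead (A : Type) : Thread A :=
  ⟨fun _ => .dead, by intro n; cases n <;> rfl⟩

/-- Termination S, lifted componentwise to the projective limit model. -/
def term (A : Type) : Thread A :=
  ⟨fun n => match n with | 0 => .dead | _ + 1 => .term,
   by intro n; cases n <;> rfl⟩

/-- Postconditional composition, lifted componentwise (cutting each component
to the appropriate depth) to the projective limit model. -/
def pcc {A : Type} (x : Thread A) (a : A) (y : Thread A) : Thread A where
  approx := fun n => match n with
    | 0 => .dead
    | n + 1 => .pcc (x.approx n) a (y.approx n)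
  coh := by
    intro n
    cases n with
    | zero => rfl
    | succ n =>
      show FinThread.proj (n + 1) (.pcc (x.approx (n + 1)) a (y.approx (n + 1))) =
        FinThread.pcc (x.approx n) a (y.approx n)
      simp [FinThread.proj, x.coh n, y.coh n]

end Thread
/-- Terms over a set `V` of variables for the right-hand sides of guarded
recursive specifications over BTA: built from D, S, postconditional
composition and variables. -/
inductive SpecTerm (A V : Type) : Type where
  | dead : SpecTerm A V
  | term : SpecTerm A V
  | var : V → SpecTerm A V
  | pcc : SpecTerm A V → A → SpecTerm A V → SpecTerm A V

namespace SpecTerm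

/-- Evaluation of a specification term in the projective limit model under an
assignment of threads to variables. -/
def eval {A V : Type} (ρ : V → Thread A) : SpecTerm A V → Thread A
  | .dead => Thread.dead A
  | .term => Thread.term A
  | .var X => ρ X
  | .pcc t a t' => Thread.pcc (t.eval ρ) a (t'.eval ρ)

end SpecTerm

/-- A recursive specification `E = {X = t_X | X ∈ V}` is guarded if each
right-hand side is of the form D, S, or `t ⊴ a ⊵ t'`. -/
def Guarded {A V : Type} (E : V → SpecTerm A V) : Prop :=
  ∀ X, E X = .dead ∨ E X = .term ∨ ∃ t a t', E X = .pcc t a t'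

/-- `ρ` is a solution of the recursive specification `E` in the projective
limit model. -/
def IsSolution {A V : Type} (E : V → SpecTerm A V) (ρ : V → Thread A) : Prop :=
  ∀ X, ρ X = (E X).eval ρ


inductive PrimInstr (B : Type) : Type where
  | basic : B → PrimInstr B
  | postest : B → PrimInstr B
  | negtest : B → PrimInstr B
  | jump : ℕ → PrimInstr B
  | halt : PrimInstr B

inductive PGA (I : Type) : Type where
  | instr : I → PGA I
  | concat : PGA I → PGA I → PGA I
  | rep : PGA I → PGA I

def InstrSeq (I : Type) : Type := List I ⊕ (ℕ → I)

namespace PGA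
def den {I : Type} : PGA I → InstrSeq I
  | .instr u => Sum.inl [u]
  | .concat P Q =>
    match P.den with
    | Sum.inl l =>
      match Q.den with
      | Sum.inl l' => Sum.inl (l ++ l')
      | Sum.inr f => Sum.inr (fun n => if n < l.length then l.getD n (f 0) else f (n - l.length))
    | Sum.inr f => Sum.inr f
  | .rep P =>
    match P.den with
    | Sum.inl [] => Sum.inl []
    | Sum.inl (a :: l) => Sum.inr (fun n => (a :: l).getD (n % (a :: l).length) a)
    | Sum.inr f => Sum.inr f
end PGA

/-- The instruction at each position (0-based) of an instruction sequence,
`none` past the end of a finite sequence. -/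
def InstrSeq.toFun {I : Type} : InstrSeq I → ℕ → Option I
  | Sum.inl l, n => l[n]?
  | Sum.inr f, n => some (f n)

section Chase
variable {I : Type} (jmp : I → Option ℕ) (s : ℕ → Option I)

/-- The target of the strict forward jump (if any) at position `i`. -/
def jumpTarget (i : ℕ) : Option ℕ :=
  match s i with
  | some u =>
    match jmp u with
    | some (l + 1) => some (i + (l + 1))
    | _ => none
  | none => none

/-- Iterated jump-following from position `i` (stabilising at non-jumps). -/
def chaseIter (i : ℕ) : ℕ → ℕ
  | 0 => i
  | k + 1 =>
    match jumpTarget jmp s (chaseIter i k) with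
    | some j => j
    | none => chaseIter i k

/-- Follow the chain of strict forward jumps from position `i`; `none` when
`i` begins an infinite chain of forward jumps. -/
noncomputable def chase (i : ℕ) : Option ℕ := by
  classical
  exact if h : ∃ k, jumpTarget jmp s (chaseIter jmp s i k) = none then
    some (chaseIter jmp s i (Nat.find h)) else none

end Chase

def PrimInstr.jmp {B : Type} : PrimInstr B → Option ℕ
  | .jump l => some l
  | _ => none


/-- The one-step behaviour of the instruction sequence `s` at position `i`. -/
noncomputable def extrStep {B : Type} (s : ℕ → Option (PrimInstr B)) (i : ℕ) :
    Step B ℕ :=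
  match chase PrimInstr.jmp s i with
  | none => .dead
  | some j =>
    match s j with
    | none => .dead
    | some (.basic a) => .node (j + 1) a (j + 1)
    | some (.postest a) => .node (j + 1) a (j + 2)
    | some (.negtest a) => .node (j + 2) a (j + 1)
    | some (.jump _) => .dead
    | some .halt => .term

/-- Thread extraction: the thread produced by a closed PGA term on execution. -/
noncomputable def PGA.extract {B : Type} (P : PGA (PrimInstr B)) : Thread B :=
  Thread.unfold (extrStep (InstrSeq.toFun P.den)) 0

attribute [ext] Thread

theorem Thread.approx_zero {A : Type} (x : Thread A) : x.approx 0 = .dead := by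
  rw [← x.coh 0]; rfl

namespace Step

variable {A S T : Type}

inductive Rel (R : S → T → Prop) : Step A S → Step A T → Prop
  | dead : Rel R .dead .dead
  | term : Rel R .term .term
  | node {x₁ x₂ : S} {y₁ y₂ : T} (a : A) :
      R x₁ y₁ → R x₂ y₂ → Rel R (.node x₁ a x₂) (.node y₁ a y₂)

def IsBisimulation (f : S → Step A S) (g : T → Step A T) (R : S → T → Prop) : Prop :=
  ∀ x y, R x y → Rel R (f x) (g y)

def SuccClosed (f : S → Step A S) (U : Set S) : Prop :=
  ∀ s ∈ U, ∀ s₁ a s₂, f s = .node s₁ a s₂ → s₁ ∈ U ∧ s₂ ∈ U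

def restrict (f : S → Step A S) {U : Set S} (hU : SuccClosed f U) (s : U) : Step A U :=
  match h : f s with
  | .dead => .dead
  | .term => .term
  | .node s₁ a s₂ => .node ⟨s₁, (hU s s.2 s₁ a s₂ h).1⟩ a ⟨s₂, (hU s s.2 s₁ a s₂ h).2⟩

theorem isBisimulation_restrict (f : S → Step A S) {U : Set S} (hU : SuccClosed f U) :
    IsBisimulation (restrict f hU) f fun s t => s.1 = t := by
  rintro s _ rfl
  unfold restrict
  split <;> rename_i h <;> simp only [h]
  exacts [.dead, .term, .node _ rfl rfl]

end Step

theorem unfoldAux_eq_of_isBisimulation {A S T : Type} {f : S → Step A S} {g : T → Step A T}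
    {R : S → T → Prop} (hR : Step.IsBisimulation f g R) (n : ℕ) {x : S} {y : T} (hxy : R x y) :
    unfoldAux f n x = unfoldAux g n y := by
  induction n generalizing x y with
  | zero => rfl
  | succ n ih =>
    show stepApply (unfoldAux f n) (f x) = stepApply (unfoldAux g n) (g y)
    match f x, g y, hR x y hxy with
    | _, _, .dead => rfl
    | _, _, .term => rfl
    | _, _, .node a h₁ h₂ => simp only [stepApply, ih h₁, ih h₂]

theorem Thread.unfold_eq_of_isBisimulation {A S T : Type} {f : S → Step A S}
    {g : T → Step A T} {R : S → T → Prop} (hR : Step.IsBisimulation f g R) {x : S} {y : T}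
    (hxy : R x y) : Thread.unfold f x = Thread.unfold g y := by
  ext n : 2
  exact unfoldAux_eq_of_isBisimulation hR n hxy

theorem Thread.unfold_restrict {A S : Type} (f : S → Step A S) {U : Set S}
    (hU : Step.SuccClosed f U) (s : U) :
    Thread.unfold (Step.restrict f hU) s = Thread.unfold f s :=
  Thread.unfold_eq_of_isBisimulation (Step.isBisimulation_restrict f hU) rfl

namespace SpecTerm

variable {A V : Type}

def head : SpecTerm A V → Step A (SpecTerm A V)
  | .dead => .dead
  | .term => .term
  | .var _ => .dead
  | .pcc t a t' => .node t a t'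

def step (E : V → SpecTerm A V) : SpecTerm A V → Step A (SpecTerm A V)
  | .var Y => (E Y).head
  | t => t.head

def subterms : SpecTerm A V → List (SpecTerm A V)
  | .dead => [.dead]
  | .term => [.term]
  | .var Y => [.var Y]
  | .pcc t a t' => .pcc t a t' :: (t.subterms ++ t'.subterms)

theorem self_mem_subterms (t : SpecTerm A V) : t ∈ t.subterms := by
  cases t <;> simp [subterms]

theorem mem_subterms_of_pcc_mem_subterms {u t t' : SpecTerm A V} {a : A}
    (h : pcc t a t' ∈ u.subterms) : t ∈ u.subterms ∧ t' ∈ u.subterms := by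
  induction u with
  | dead | term | var => simp [subterms] at h
  | pcc x b y ihx ihy =>
    simp only [subterms, List.mem_cons, List.mem_append, pcc.injEq] at h ⊢
    rcases h with ⟨rfl, -, rfl⟩ | h | h
    · exact ⟨.inr (.inl t.self_mem_subterms), .inr (.inr t'.self_mem_subterms)⟩
    · exact ⟨.inr (.inl (ihx h).1), .inr (.inl (ihx h).2)⟩
    · exact ⟨.inr (.inr (ihy h).1), .inr (.inr (ihy h).2)⟩

theorem step_eq_node {E : V → SpecTerm A V} {t t₁ t₂ : SpecTerm A V} {a : A}
    (h : step E t = .node t₁ a t₂) : t = .pcc t₁ a t₂ ∨ ∃ Y, E Y = .pcc t₁ a t₂ := by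
  cases t with
  | dead | term => simp [step, head] at h
  | pcc => simp_all [step, head]
  | var Y =>
    right; refine ⟨Y, ?_⟩
    cases hY : E Y <;> simp_all [step, head]

def rhsSubterms (E : V → SpecTerm A V) : Set (SpecTerm A V) :=
  ⋃ Y, {t | t ∈ (E Y).subterms}

theorem finite_rhsSubterms [Finite V] (E : V → SpecTerm A V) : (rhsSubterms E).Finite :=
  Set.finite_iUnion fun Y => (E Y).subterms.finite_toSet

theorem succClosed_rhsSubterms (E : V → SpecTerm A V) :
    Step.SuccClosed (step E) (rhsSubterms E) := by
  intro t ht t₁ a t₂ h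
  have hpcc : ∃ Y, pcc t₁ a t₂ ∈ (E Y).subterms := by
    rcases step_eq_node h with rfl | ⟨Y, hY⟩
    · simpa [rhsSubterms] using ht
    · exact ⟨Y, hY ▸ self_mem_subterms _⟩
  obtain ⟨Y, hY⟩ := hpcc
  obtain ⟨h₁, h₂⟩ := mem_subterms_of_pcc_mem_subterms hY
  exact ⟨Set.mem_iUnion.2 ⟨Y, h₁⟩, Set.mem_iUnion.2 ⟨Y, h₂⟩⟩

theorem step_var_of_guarded {E : V → SpecTerm A V} (hE : Guarded E) (Y : V) :
    step E (.var Y) = step E (E Y) := by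
  rcases hE Y with h | h | ⟨t, a, t', h⟩ <;> simp [step, h, head]

theorem unfold_step_eq_eval {E : V → SpecTerm A V} (hE : Guarded E) {ρ : V → Thread A}
    (hρ : IsSolution E ρ) (t : SpecTerm A V) : Thread.unfold (step E) t = t.eval ρ := by
  ext n : 2
  show unfoldAux (step E) n t = (t.eval ρ).approx n
  induction n generalizing t with
  | zero => exact (Thread.approx_zero _).symm
  | succ n ih =>
    have nonvar : ∀ u : SpecTerm A V, (∀ Y, u ≠ .var Y) →
        unfoldAux (step E) (n + 1) u = (u.eval ρ).approx (n + 1) := by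
      intro u hu
      cases u with
      | dead | term => rfl
      | var Y => exact absurd rfl (hu Y)
      | pcc u a u' =>
        show FinThread.pcc _ a _ = FinThread.pcc _ a _
        rw [ih, ih]
    cases t with
    | var Y =>
      have hEY : ∀ Z, E Y ≠ .var Z := by
        rcases hE Y with h | h | ⟨_, _, _, h⟩ <;> simp [h]
      show stepApply _ (step E (.var Y)) = (ρ Y).approx (n + 1)
      rw [step_var_of_guarded hE, hρ Y]
      exact nonvar _ hEY
    | _ => exact nonvar _ (by simp)

end SpecTerm

section Chase

variable {I : Type} {jmp : I → Option ℕ} {s : ℕ → Option I} {i j : ℕ}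

theorem chase_eq_self (h : jumpTarget jmp s i = none) : chase jmp s i = some i := by
  have hex : ∃ k, jumpTarget jmp s (chaseIter jmp s i k) = none := ⟨0, h⟩
  rw [chase, dif_pos hex, (Nat.find_eq_zero hex).2 h]
  rfl

theorem chase_eq_of_jumpTarget (hi : jumpTarget jmp s i = some j)
    (hj : jumpTarget jmp s j = none) : chase jmp s i = some j := by
  have hiter : chaseIter jmp s i 1 = j := by simp [chaseIter, hi]
  have hex : ∃ k, jumpTarget jmp s (chaseIter jmp s i k) = none := ⟨1, hiter ▸ hj⟩
  have hfind : Nat.find hex = 1 := by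
    rw [Nat.find_eq_iff]
    refine ⟨hiter ▸ hj, fun k hk => ?_⟩
    obtain rfl : k = 0 := by omega
    simp [chaseIter, hi]
  rw [chase, dif_pos hex, hfind, hiter]

end Chase

namespace PGA

variable {I : Type}

def ofList (u : I) : List I → PGA I
  | [] => .instr u
  | v :: l => .concat (.instr u) (ofList v l)

theorem den_ofList (u : I) (l : List I) : (ofList u l).den = .inl (u :: l) := by
  induction l generalizing u with
  | nil => rfl
  | cons v l ih => simp [ofList, den, ih]; rfl

theorem exists_toFun_den_eq_periodic (g : ℕ → I) {N : ℕ} (hN : 0 < N) :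
    ∃ P : PGA I, InstrSeq.toFun P.den = fun n => some (g (n % N)) := by
  obtain ⟨N, rfl⟩ : ∃ N', N = N' + 1 := ⟨N - 1, by omega⟩
  have hlist : g 0 :: (List.range N).map (g ∘ Nat.succ) = (List.range (N + 1)).map g := by
    rw [List.range_succ_eq_map, List.map_cons, List.map_map]
  refine ⟨.rep (ofList (g 0) ((List.range N).map (g ∘ Nat.succ))), funext fun n => ?_⟩
  have hlen : ((List.range (N + 1)).map g).length = N + 1 := by simp
  rw [den, den_ofList]
  show some (List.getD _ _ _) = _
  rw [hlist, hlen, List.getD_eq_getElem _ _ (by rw [hlen]; exact Nat.mod_lt n hN), List.getElem_map,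
    List.getElem_range]

end PGA

theorem add_sub_mod_mod_eq {p t N : ℕ} (ht : t < N) : (p + (t + N - p % N)) % N = t := by
  have hdiv := Nat.div_add_mod p N
  have hmod := Nat.mod_lt p (by omega : 0 < N)
  have : p + (t + N - p % N) = t + N * (p / N + 1) := by rw [Nat.mul_succ]; omega
  rw [this, Nat.add_mul_mod_self_left, Nat.mod_eq_of_lt ht]

namespace Simulation

variable {B S : Type} {m : ℕ} [NeZero m] (f : S → Step B S) (e : S ≃ Fin m)

/-- State `s` owns the positions `3 * e s`, `3 * e s + 1`, `3 * e s + 2` of a program of period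
`3 * m`, holding `+a; #d₁; #d₂` when `f s = .node s₁ a s₂`, where `#dᵢ` jumps to the start of the
block of `sᵢ` in the next period; a block starting with `#0` or `!` is inaction or termination. -/
def blockInstr (q : ℕ) : Step B S → PrimInstr B
  | .dead => .jump 0
  | .term => .halt
  | .node s₁ a s₂ =>
    match q % 3 with
    | 0 => .postest a
    | 1 => .jump (3 * e s₁ + 3 * m - q)
    | _ => .jump (3 * e s₂ + 3 * m - q)

def instr (q : ℕ) : PrimInstr B :=
  blockInstr e q (f (e.symm (Fin.ofNat m (q / 3))))

def stream (n : ℕ) : Option (PrimInstr B) := some (instr f e (n % (3 * m)))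

def LeadsTo (p : ℕ) (s : S) : Prop :=
  ∃ j, chase PrimInstr.jmp (stream f e) p = some j ∧ j % (3 * m) = 3 * e s

variable {f e}

omit [NeZero m] in
theorem add_mod_of_block {j k : ℕ} {s : S} (hj : j % (3 * m) = 3 * e s) (hk : k < 3) :
    (j + k) % (3 * m) = 3 * e s + k := by
  have hs := (e s).isLt
  rw [Nat.add_mod, hj, Nat.mod_eq_of_lt (by omega : k < 3 * m),
    Nat.mod_eq_of_lt (by omega : 3 * (e s : ℕ) + k < 3 * m)]

theorem stream_block {j k : ℕ} {s : S} (hj : j % (3 * m) = 3 * e s) (hk : k < 3) :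
    stream f e (j + k) = some (blockInstr e (3 * e s + k) (f s)) := by
  have hs := (e s).isLt
  have hstate : e.symm (Fin.ofNat m ((3 * e s + k) / 3)) = s := by
    rw [Equiv.symm_apply_eq, Fin.ext_iff, Fin.val_ofNat, Nat.mod_eq_of_lt (by omega)]
    omega
  rw [stream, add_mod_of_block hj hk, instr, hstate]

theorem stream_block_start {j : ℕ} {s : S} (hj : j % (3 * m) = 3 * e s) :
    stream f e j = some (blockInstr e (3 * e s) (f s)) :=
  stream_block (k := 0) hj (by norm_num)

theorem jumpTarget_stream_eq_none {p : ℕ} {s : S} (hp : p % (3 * m) = 3 * e s) :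
    jumpTarget PrimInstr.jmp (stream f e) p = none := by
  rw [jumpTarget, stream_block_start hp]
  cases f s <;> simp [blockInstr, PrimInstr.jmp]

theorem leadsTo_of_jump {p r : ℕ} {s : S} (hr : p % (3 * m) = r)
    (h : stream f e p = some (.jump (3 * e s + 3 * m - r))) : LeadsTo f e p s := by
  have hs := (e s).isLt
  have hlt := Nat.mod_lt p (Nat.mul_pos (by norm_num : 0 < 3) (NeZero.pos m))
  obtain ⟨l, hl⟩ : ∃ l, 3 * (e s : ℕ) + 3 * m - r = l + 1 := ⟨_, (Nat.succ_pred (by omega)).symm⟩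
  have hland : (p + (l + 1)) % (3 * m) = 3 * e s := by
    rw [← hl, ← hr]
    exact add_sub_mod_mod_eq (by omega)
  refine ⟨p + (l + 1), chase_eq_of_jumpTarget ?_ (jumpTarget_stream_eq_none hland), hland⟩
  simp [jumpTarget, h, hl, PrimInstr.jmp]

theorem isBisimulation_leadsTo : Step.IsBisimulation (extrStep (stream f e)) f (LeadsTo f e) := by
  rintro p s ⟨j, hchase, hj⟩
  have h₀ := stream_block_start (f := f) hj
  rcases hfs : f s with _ | _ | ⟨s₁, a, s₂⟩ <;> rw [hfs] at h₀
  · simpa [extrStep, hchase, h₀, blockInstr] using Step.Rel.dead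
  · simpa [extrStep, hchase, h₀, blockInstr] using Step.Rel.term
  · have h₁ := stream_block (f := f) hj (k := 1) (by norm_num)
    have h₂ := stream_block (f := f) hj (k := 2) (by norm_num)
    simp only [hfs, blockInstr, show (3 * (e s : ℕ) + 1) % 3 = 1 by omega,
      show (3 * (e s : ℕ) + 2) % 3 = 2 by omega] at h₁ h₂
    simp only [extrStep, hchase, h₀, blockInstr, Nat.mul_mod_right]
    exact .node a (leadsTo_of_jump (add_mod_of_block hj (by norm_num)) h₁)
      (leadsTo_of_jump (add_mod_of_block hj (by norm_num)) h₂)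

variable (f e) in
theorem unfold_extrStep_stream (s : S) :
    Thread.unfold (extrStep (stream f e)) (3 * e s) = Thread.unfold f s := by
  have hs : 3 * (e s : ℕ) % (3 * m) = 3 * e s := Nat.mod_eq_of_lt (by have := (e s).isLt; omega)
  exact Thread.unfold_eq_of_isBisimulation isBisimulation_leadsTo
    ⟨_, chase_eq_self (jumpTarget_stream_eq_none hs), hs⟩

end Simulation

theorem exists_extract_eq_unfold {B S : Type} [Finite S] (f : S → Step B S) (s₀ : S) :
    ∃ P : PGA (PrimInstr B), P.extract = Thread.unfold f s₀ := by
  obtain ⟨m, ⟨e₀⟩⟩ := Finite.exists_equiv_fin S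
  have : NeZero m := ⟨fun hm => (hm ▸ e₀ s₀).elim0⟩
  let e := e₀.trans (Equiv.swap (e₀ s₀) 0)
  have he : e s₀ = 0 := Equiv.swap_apply_left _ _
  obtain ⟨P, hP⟩ := PGA.exists_toFun_den_eq_periodic (Simulation.instr f e) (N := 3 * m)
    (Nat.mul_pos (by norm_num) (NeZero.pos m))
  refine ⟨P, ?_⟩
  have hstart := Simulation.unfold_extrStep_stream f e s₀
  rw [he, Fin.val_zero, mul_zero] at hstart
  rw [PGA.extract, hP, ← hstart]
  rfl

theorem spec_component_is_extract_general
    (B : Type) (V : Type) [Fintype V]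
    (E : V → SpecTerm B V) (hE : Guarded E)
    (ρ : V → Thread B) (hρ : IsSolution E ρ) (X : V) :
    ∃ P : PGA (PrimInstr B), P.extract = ρ X := by
  have hclosed := SpecTerm.succClosed_rhsSubterms E
  have : Finite (SpecTerm.rhsSubterms E) := (SpecTerm.finite_rhsSubterms E).to_subtype
  obtain ⟨P, hP⟩ := exists_extract_eq_unfold (Step.restrict _ hclosed)
    ⟨E X, Set.mem_iUnion.2 ⟨X, (E X).self_mem_subterms⟩⟩
  refine ⟨P, ?_⟩
  rw [hP, Thread.unfold_restrict, SpecTerm.unfold_step_eq_eval hE hρ, hρ X]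

/-- For every finite guarded recursive specification `E` over BTA
in which no internal actions occur (the basic actions being the basic
instructions of PGA, i.e. the action type is `B`) and every variable `X` of
`E`, there exists a closed PGA term `P` such that the thread `|P|` extracted
from `P` equals the `X`-component of the unique solution of `E` in the
projective limit model. -/
theorem spec_component_is_extract
    (B : Type) [Finite B] (V : Type) [Fintype V]
    (E : V → SpecTerm B V) (hE : Guarded E)
    (ρ : V → Thread B) (hρ : IsSolution E ρ) (X : V) :
    ∃ P : PGA (PrimInstr B), P.extract = ρ X :=
  spec_component_is_extract_general B V E hE ρ hρ X
end

section
/- For every PGLD program P = u_1;...;u_k, the thread |pgldpga(P)| extracted from the PGA program pgldpga(P) equals the behaviour of P, where pgldpga(u_1;...;u_k) = (ψ_1(u_1);...;ψ_k(u_k);!;!)^ω and, for 1 ≤ j ≤ k: ψ_j(##l) = #(l − j) if j ≤ l ≤ k, ψ_j(##l) = #(k + 2 − (j − l)) if 0 < l < j, ψ_j(##l) = ! if l = 0 or l > k, and ψ_j(u) = u if u is not a jump instruction. -/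
/-- Primitive instructions of PGLD over a set `B` of basic instructions:
plain basic, positive test, negative test, and absolute jump instructions. -/
inductive PGLDInstr (B : Type) : Type where
  | basic : B → PGLDInstr B
  | postest : B → PGLDInstr B
  | negtest : B → PGLDInstr B
  | ajump : ℕ → PGLDInstr B

/-- The function `ψ_j` (for a PGLD program of length `k`) translating the
`j`-th PGLD instruction into a PGA instruction. -/
def psi {B : Type} (k j : ℕ) : PGLDInstr B → PrimInstr B
  | .basic a => .basic a
  | .postest a => .postest a
  | .negtest a => .negtest a
  | .ajump l =>
    if j ≤ l ∧ l ≤ k then .jump (l - j)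
    else if 0 < l ∧ l < j then .jump (k + 2 - (j - l))
    else .halt

/-- The projection `pgldpga`:
`pgldpga(u_1;...;u_k) = (ψ_1(u_1);...;ψ_k(u_k);!;!)^ω`. -/
def pgldpga {B : Type} (P : List (PGLDInstr B)) : PGA (PrimInstr B) :=
  .rep (((P.mapIdx fun idx u => psi P.length (idx + 1) u) ++
      [PrimInstr.halt]).foldr (fun u t => .concat (.instr u) t)
      (.instr PrimInstr.halt))

section PGLDBehaviour
variable {B : Type} (P : List (PGLDInstr B))

/-- The target of the (absolute) jump instruction (if any) at position `j`
(positions are 1-based; positions 0 and > length carry no instruction). -/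
def pgldJumpTarget (j : ℕ) : Option ℕ :=
  if j = 0 then none
  else
    match P[j - 1]? with
    | some (.ajump l) => some l
    | _ => none

def pgldChaseIter (j : ℕ) : ℕ → ℕ
  | 0 => j
  | k + 1 =>
    match pgldJumpTarget P (pgldChaseIter j k) with
    | some j' => j'
    | none => pgldChaseIter j k

/-- Follow the chain of jump instructions from position `j`; `none` when `j`
begins an infinite chain of jump instructions. -/
noncomputable def pgldChase (j : ℕ) : Option ℕ := by
  classical
  exact if h : ∃ k, pgldJumpTarget P (pgldChaseIter P j k) = none then
    some (pgldChaseIter P j (Nat.find h)) else none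

/-- The one-step behaviour of the PGLD program `P` at position `j`. -/
noncomputable def pgldStep (j : ℕ) : Step B ℕ :=
  match pgldChase P j with
  | none => .dead
  | some j' =>
    if j' = 0 then .term
    else
      match P[j' - 1]? with
      | none => .term
      | some (.basic a) => .node (j' + 1) a (j' + 1)
      | some (.postest a) => .node (j' + 1) a (j' + 2)
      | some (.negtest a) => .node (j' + 2) a (j' + 1)
      | some (.ajump _) => .dead

/-- The behaviour of a PGLD program: the thread `|1, P|`. -/
noncomputable def pgldBehaviour : Thread B :=
  Thread.unfold (pgldStep P) 1

end PGLDBehaviour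

/-!
The instruction sequence of `pgldpga P` is the periodic repetition of
`ψ_1(u_1);...;ψ_k(u_k);!;!`, and its position `i` behaves like PGLD position
`i mod (k + 2) + 1`. A forward jump `#(n+1)` there is the translation of an absolute jump
`##l`, and it lands, modulo the period `k + 2`, exactly on `l`; the only other translations of
jumps are `#0` for the self-jump `##j` (inaction on both sides) and `!` for jumps outside
`1..k` (termination on both sides). So `i ↦ i mod (k + 2) + 1` maps jump chains of the PGA
sequence to jump chains of `P`, and once a chain ends both programs take the same step. This
makes it a morphism between the two step functions, and morphisms preserve the unfolded
threads.
-/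

section ChainEnd
variable {α β : Type*} (t : α → Option α)

def chainStep (a : α) : α := (t a).getD a

noncomputable def chainEnd (a : α) : Option α := by
  classical
  exact if h : ∃ n, t ((chainStep t)^[n] a) = none then
    some ((chainStep t)^[Nat.find h] a) else none

variable {t}

theorem chainStep_of_eq_none {a : α} (h : t a = none) : chainStep t a = a := by
  simp [chainStep, h]

theorem chainStep_of_eq_some {a b : α} (h : t a = some b) : chainStep t a = b := by
  simp [chainStep, h]

theorem chainEnd_eq_some_iff {a b : α} :
    chainEnd t a = some b ↔ ∃ n, (chainStep t)^[n] a = b ∧ t b = none := by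
  classical
  unfold chainEnd
  constructor
  · intro h
    split_ifs at h with hex
    cases h
    exact ⟨_, rfl, Nat.find_spec hex⟩
  · rintro ⟨n, rfl, hn⟩
    have hex : ∃ n, t ((chainStep t)^[n] a) = none := ⟨n, hn⟩
    rw [dif_pos hex]
    obtain ⟨m, hm⟩ := Nat.exists_eq_add_of_le (Nat.find_min' hex hn)
    rw [hm, add_comm, Function.iterate_add_apply,
      Function.iterate_fixed (chainStep_of_eq_none (Nat.find_spec hex))]

theorem chainEnd_eq_none_iff {a : α} :
    chainEnd t a = none ↔ ∀ n, t ((chainStep t)^[n] a) ≠ none := by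
  classical
  unfold chainEnd
  split_ifs with hex <;> simpa using hex

theorem chainEnd_of_eq_none {a : α} (h : t a = none) : chainEnd t a = some a :=
  chainEnd_eq_some_iff.2 ⟨0, rfl, h⟩

theorem eq_none_of_chainEnd_eq_some {a b : α} (h : chainEnd t a = some b) : t b = none :=
  (chainEnd_eq_some_iff.1 h).elim fun _ hn => hn.2

theorem chainEnd_of_eq_some {a b : α} (h : t a = some b) : chainEnd t a = chainEnd t b := by
  ext c
  simp only [chainEnd_eq_some_iff]
  constructor
  · rintro ⟨_ | n, rfl, hc⟩
    · simp [h] at hc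
    · exact ⟨n, by rw [Function.iterate_succ_apply, chainStep_of_eq_some h], hc⟩
  · rintro ⟨n, rfl, hc⟩
    exact ⟨n + 1, by rw [Function.iterate_succ_apply, chainStep_of_eq_some h], hc⟩

theorem chainEnd_of_eq_self {a : α} (h : t a = some a) : chainEnd t a = none :=
  chainEnd_eq_none_iff.2 fun n => by
    simp [Function.iterate_fixed (chainStep_of_eq_some h), h]

theorem chainEnd_map {t' : β → Option β} {φ : α → β}
    (hφ : ∀ {a b}, t a = some b → t' (φ a) = some (φ b)) (a : α) :
    chainEnd t' (φ a) = (chainEnd t a).bind fun b => chainEnd t' (φ b) := by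
  rcases h : chainEnd t a with _ | b
  · have hstep : ∀ n, t ((chainStep t)^[n] a) ≠ none := chainEnd_eq_none_iff.1 h
    have hiter : ∀ n, (chainStep t')^[n] (φ a) = φ ((chainStep t)^[n] a) := by
      intro n
      induction n with
      | zero => rfl
      | succ n ih =>
        obtain ⟨b, hb⟩ := Option.ne_none_iff_exists'.1 (hstep n)
        rw [Function.iterate_succ_apply', Function.iterate_succ_apply', ih,
          chainStep_of_eq_some hb, chainStep_of_eq_some (hφ hb)]
    refine chainEnd_eq_none_iff.2 fun n => ?_
    obtain ⟨b, hb⟩ := Option.ne_none_iff_exists'.1 (hstep n)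
    simp [hiter, hφ hb]
  · obtain ⟨n, rfl, -⟩ := chainEnd_eq_some_iff.1 h
    clear h
    induction n generalizing a with
    | zero => rfl
    | succ n ih =>
      rw [Function.iterate_succ_apply, ← ih]
      rcases ht : t a with _ | b
      · rw [chainStep_of_eq_none ht]
      · rw [chainStep_of_eq_some ht, chainEnd_of_eq_some (hφ ht)]

end ChainEnd

theorem chaseIter_eq_iterate {I : Type} (jmp : I → Option ℕ) (s : ℕ → Option I)
    (i n : ℕ) :
    chaseIter jmp s i n = (chainStep (jumpTarget jmp s))^[n] i := by
  induction n with
  | zero => rfl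
  | succ n ih =>
    rw [Function.iterate_succ_apply', ← ih, chaseIter, chainStep]
    cases jumpTarget jmp s (chaseIter jmp s i n) <;> rfl

theorem chase_eq_chainEnd {I : Type} (jmp : I → Option ℕ) (s : ℕ → Option I) :
    chase jmp s = chainEnd (jumpTarget jmp s) := by
  have h : chaseIter jmp s = fun i n => (chainStep (jumpTarget jmp s))^[n] i :=
    funext₂ (chaseIter_eq_iterate jmp s)
  funext i
  unfold chase chainEnd
  rw [h]

theorem pgldChaseIter_eq_iterate {B : Type} (P : List (PGLDInstr B)) (j n : ℕ) :
    pgldChaseIter P j n = (chainStep (pgldJumpTarget P))^[n] j := by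
  induction n with
  | zero => rfl
  | succ n ih =>
    rw [Function.iterate_succ_apply', ← ih, pgldChaseIter, chainStep]
    cases pgldJumpTarget P (pgldChaseIter P j n) <;> rfl

theorem pgldChase_eq_chainEnd {B : Type} (P : List (PGLDInstr B)) :
    pgldChase P = chainEnd (pgldJumpTarget P) := by
  have h : pgldChaseIter P = fun j n => (chainStep (pgldJumpTarget P))^[n] j :=
    funext₂ (pgldChaseIter_eq_iterate P)
  funext j
  unfold pgldChase chainEnd
  rw [h]

def Step.map {A S T : Type} (φ : S → T) : Step A S → Step A T
  | .dead => .dead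
  | .term => .term
  | .node s a t => .node (φ s) a (φ t)

theorem unfoldAux_eq_of_map {A S T : Type} {f : S → Step A S} {g : T → Step A T} {φ : S → T}
    (h : ∀ s, (f s).map φ = g (φ s)) (n : ℕ) (s : S) :
    unfoldAux f n s = unfoldAux g n (φ s) := by
  induction n generalizing s with
  | zero => rfl
  | succ n ih =>
    rw [unfoldAux, unfoldAux, ← h]
    cases f s <;> simp only [Step.map, stepApply, ih]

theorem Thread.unfold_eq_of_map {A S T : Type} {f : S → Step A S} {g : T → Step A T}
    {φ : S → T} (h : ∀ s, (f s).map φ = g (φ s)) (s : S) :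
    Thread.unfold f s = Thread.unfold g (φ s) := by
  simp only [Thread.unfold, Thread.mk.injEq]
  funext n
  exact unfoldAux_eq_of_map h n s

theorem PGA.den_foldr_concat {I : Type} (l : List I) (u : I) :
    (l.foldr (fun u t => PGA.concat (.instr u) t) (.instr u)).den = .inl (l ++ [u]) := by
  induction l with
  | nil => rfl
  | cons a l ih => simp only [List.foldr_cons, PGA.den, ih, List.cons_append]; rfl

theorem PGA.toFun_den_rep {I : Type} {P : PGA I} {l : List I} (h : P.den = .inl l)
    (hl : l ≠ []) (n : ℕ) : (PGA.rep P).den.toFun n = l[n % l.length]? := by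
  obtain ⟨a, l, rfl⟩ := List.exists_cons_of_ne_nil hl
  simp only [PGA.den, h, InstrSeq.toFun]
  rw [List.getElem?_eq_getElem (Nat.mod_lt _ (List.length_pos_of_ne_nil hl)),
    List.getD_eq_getElem]

theorem jumpTarget_jmp_eq_some_iff {B : Type} {s : ℕ → Option (PrimInstr B)} {i i' : ℕ} :
    jumpTarget PrimInstr.jmp s i = some i' ↔
      ∃ d, s i = some (.jump (d + 1)) ∧ i' = i + (d + 1) := by
  unfold jumpTarget
  rcases s i with _ | (_ | _ | _ | (_ | d) | _) <;> simp [PrimInstr.jmp, eq_comm]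

theorem psi_ajump_lands {B : Type} {k r l d : ℕ} (hr : r < k)
    (h : psi (B := B) k (r + 1) (.ajump l) = .jump (d + 1)) :
    (r + (d + 1)) % (k + 2) + 1 = l := by
  simp only [psi] at h
  split_ifs at h with h₁ h₂ <;> injection h with h
  · rw [Nat.mod_eq_of_lt (by omega)]
    omega
  · rw [show r + (d + 1) = l - 1 + (k + 2) by omega, Nat.add_mod_right,
      Nat.mod_eq_of_lt (by omega)]
    omega

theorem psi_ajump_of_ne_jump_succ {B : Type} {k r l : ℕ} (hr : r < k)
    (h : ∀ d, psi (B := B) k (r + 1) (.ajump l) ≠ .jump (d + 1)) :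
    l = r + 1 ∧ psi (B := B) k (r + 1) (.ajump l) = .jump 0 ∨
      (l = 0 ∨ k < l) ∧ psi (B := B) k (r + 1) (.ajump l) = .halt := by
  simp only [psi] at h ⊢
  split_ifs at h ⊢ with h₁ h₂
  · have hl : l = r + 1 := by
      by_contra hl
      exact h (l - (r + 2)) (by rw [show l - (r + 1) = l - (r + 2) + 1 by omega])
    exact .inl ⟨hl, by rw [hl, Nat.sub_self]⟩
  · exact (h (k + 1 - (r + 1 - l))
      (by rw [show k + 2 - (r + 1 - l) = k + 1 - (r + 1 - l) + 1 by omega])).elim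
  · exact .inr ⟨by omega, rfl⟩

section PgldStep
variable {B : Type} (P : List (PGLDInstr B))

theorem pgldStep_of_out_of_range {j : ℕ} (h : j = 0 ∨ P.length < j) : pgldStep P j = .term := by
  have hjt : pgldJumpTarget P j = none := by
    rcases h with rfl | h
    · rfl
    · simp [pgldJumpTarget, List.getElem?_eq_none (show P.length ≤ j - 1 by omega)]
  rcases h with rfl | h
  · simp [pgldStep, pgldChase_eq_chainEnd, chainEnd_of_eq_none hjt]
  · simp [pgldStep, pgldChase_eq_chainEnd, chainEnd_of_eq_none hjt, show j ≠ 0 by omega,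
      List.getElem?_eq_none (show P.length ≤ j - 1 by omega)]

theorem pgldStep_of_pgldJumpTarget_eq_some {j l : ℕ} (h : pgldJumpTarget P j = some l) :
    pgldStep P j = pgldStep P l := by
  simp only [pgldStep, pgldChase_eq_chainEnd, chainEnd_of_eq_some h]

theorem pgldStep_of_pgldJumpTarget_eq_self {j : ℕ} (h : pgldJumpTarget P j = some j) :
    pgldStep P j = .dead := by
  simp only [pgldStep, pgldChase_eq_chainEnd, chainEnd_of_eq_self h]

end PgldStep

section Pgldpga
variable {B : Type} (P : List (PGLDInstr B))

/-- Position `i` (0-based) of the unrolled repetition `(ψ_1(u_1);...;ψ_k(u_k);!;!)^ω` plays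
the role of PGLD position `i mod (k + 2) + 1`; the two trailing `!` sit at PGLD positions `k + 1`
and `k + 2`, where PGLD terminates too. -/
def pgldPos (i : ℕ) : ℕ := i % (P.length + 2) + 1

theorem pgldPos_add (i c : ℕ) :
    pgldPos P (i + c) = (i % (P.length + 2) + c) % (P.length + 2) + 1 := by
  rw [pgldPos, Nat.mod_add_mod]

theorem toFun_den_pgldpga (i : ℕ) :
    (pgldpga P).den.toFun i = (P.mapIdx (fun idx u => psi P.length (idx + 1) u) ++
      [.halt, .halt])[i % (P.length + 2)]? := by
  unfold pgldpga
  rw [PGA.toFun_den_rep (PGA.den_foldr_concat _ _) (by simp)]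
  simp

theorem toFun_den_pgldpga_of_lt {i : ℕ} (h : i % (P.length + 2) < P.length) :
    (pgldpga P).den.toFun i =
      some (psi P.length (i % (P.length + 2) + 1) P[i % (P.length + 2)]) := by
  rw [toFun_den_pgldpga, List.getElem?_append_left (by simpa using h)]
  simp [h]

theorem toFun_den_pgldpga_of_le {i : ℕ} (h : P.length ≤ i % (P.length + 2)) :
    (pgldpga P).den.toFun i = some .halt := by
  have : i % (P.length + 2) < P.length + 2 := Nat.mod_lt _ (by omega)
  rw [toFun_den_pgldpga, List.getElem?_append_right (by simpa using h)]
  rcases (show i % (P.length + 2) - P.length = 0 ∨ i % (P.length + 2) - P.length = 1 by omega)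
    with h' | h' <;> simp [h']

theorem pgldJumpTarget_succ (r : ℕ) :
    pgldJumpTarget P (r + 1) = match P[r]? with
      | some (.ajump l) => some l
      | _ => none := by
  simp [pgldJumpTarget]

theorem pgldJumpTarget_pgldPos {i i' : ℕ}
    (h : jumpTarget PrimInstr.jmp (pgldpga P).den.toFun i = some i') :
    pgldJumpTarget P (pgldPos P i) = some (pgldPos P i') := by
  obtain ⟨d, hs, rfl⟩ := jumpTarget_jmp_eq_some_iff.1 h
  have hr : i % (P.length + 2) < P.length := by
    by_contra hr
    rw [toFun_den_pgldpga_of_le P (not_lt.1 hr)] at hs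
    cases hs
  rw [toFun_den_pgldpga_of_lt P hr] at hs
  rw [pgldPos, pgldJumpTarget_succ, List.getElem?_eq_getElem hr, pgldPos_add]
  cases hu : P[i % (P.length + 2)] with
  | ajump l =>
    rw [hu] at hs
    exact congrArg some (psi_ajump_lands hr (Option.some_inj.1 hs)).symm
  | _ => rw [hu] at hs; cases hs

theorem extrStep_map_pgldPos_of_jumpTarget_eq_none {i : ℕ}
    (h : jumpTarget PrimInstr.jmp (pgldpga P).den.toFun i = none) :
    (extrStep (pgldpga P).den.toFun i).map (pgldPos P) = pgldStep P (pgldPos P i) := by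
  have hchase : chase PrimInstr.jmp (pgldpga P).den.toFun i = some i := by
    rw [chase_eq_chainEnd, chainEnd_of_eq_none h]
  rcases lt_or_ge (i % (P.length + 2)) P.length with hr | hr
  · have hs := toFun_den_pgldpga_of_lt P hr
    have hP := List.getElem?_eq_getElem hr
    have hjt := pgldJumpTarget_succ P (i % (P.length + 2))
    cases hu : P[i % (P.length + 2)] with
    | ajump l =>
      rw [hu] at hs hP
      rw [hP] at hjt
      have hnj : ∀ d, psi P.length (i % (P.length + 2) + 1) (.ajump l) ≠ .jump (d + 1) :=
        fun d hd => by
          have := jumpTarget_jmp_eq_some_iff.2 ⟨d, hs.trans (congrArg some hd), rfl⟩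
          rw [h] at this
          cases this
      rcases psi_ajump_of_ne_jump_succ hr hnj with ⟨rfl, hpsi⟩ | ⟨hl, hpsi⟩
      · rw [pgldPos, pgldStep_of_pgldJumpTarget_eq_self P hjt]
        simp [extrStep, hchase, hs, hpsi, Step.map]
      · rw [pgldPos, pgldStep_of_pgldJumpTarget_eq_some P hjt, pgldStep_of_out_of_range P hl]
        simp [extrStep, hchase, hs, hpsi, Step.map]
    | _ a =>
      rw [hu] at hs hP
      rw [hP] at hjt
      have hsucc : ∀ c ≤ 2, (i + c) % (P.length + 2) = i % (P.length + 2) + c := fun c hc => by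
        rw [← Nat.mod_add_mod, Nat.mod_eq_of_lt (by omega)]
      simp [extrStep, pgldStep, pgldPos, hchase, hs, psi, pgldChase_eq_chainEnd,
        chainEnd_of_eq_none hjt, hP, Step.map, hsucc 1 (by norm_num), hsucc 2 le_rfl]
  · rw [pgldStep_of_out_of_range P (.inr (by simp only [pgldPos]; omega))]
    simp [extrStep, hchase, toFun_den_pgldpga_of_le P hr, Step.map]

theorem extrStep_map_pgldPos (i : ℕ) :
    (extrStep (pgldpga P).den.toFun i).map (pgldPos P) = pgldStep P (pgldPos P i) := by
  have hend := chainEnd_map (pgldJumpTarget_pgldPos P) i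
  rcases h : chainEnd (jumpTarget PrimInstr.jmp (pgldpga P).den.toFun) i with _ | j
  · rw [h, Option.bind_none] at hend
    simp only [extrStep, pgldStep, chase_eq_chainEnd, pgldChase_eq_chainEnd, h, hend, Step.map]
  · rw [h, Option.bind_some] at hend
    have hj := eq_none_of_chainEnd_eq_some h
    calc (extrStep (pgldpga P).den.toFun i).map (pgldPos P)
        = (extrStep (pgldpga P).den.toFun j).map (pgldPos P) := by
          simp only [extrStep, chase_eq_chainEnd, h, chainEnd_of_eq_none hj]
      _ = pgldStep P (pgldPos P j) := extrStep_map_pgldPos_of_jumpTarget_eq_none P hj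
      _ = pgldStep P (pgldPos P i) := by simp only [pgldStep, pgldChase_eq_chainEnd, hend]

end Pgldpga

theorem pgldpga_correct_general (B : Type)
    (P : List (PGLDInstr B)) :
    (pgldpga P).extract = pgldBehaviour P := by
  have h := Thread.unfold_eq_of_map (extrStep_map_pgldPos P) 0
  rwa [pgldPos, Nat.zero_mod] at h

/-- For every PGLD program `P = u_1;...;u_k`, the thread
`|pgldpga(P)|` extracted from the PGA program `pgldpga(P)` equals the
behaviour of `P`. -/
theorem pgldpga_correct (B : Type) [Finite B]
    (P : List (PGLDInstr B)) (hP : P ≠ []) :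
    (pgldpga P).extract = pgldBehaviour P :=
  pgldpga_correct_general B P
end
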